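/- (Multi-split conformal bands are wider) Under assumptions A0 (i.i.d. data), A1 (independent symmetric noise), and A2 (sampling stability: P(||μ̂_n - μ̃||_∞ ≥ η_n) ≤ ρ_n with η_n = o(1), ρ_n = o(n^{-1})), and assuming |Y - μ̃(X)| has continuous distribution, with probability tending to 1 as n → ∞, the N-fold Bonferroni multi-split conformal band C_split^{(N)}(X) = ∩_{j=1}^N C_{split,j}(X) (each split at level 1-α/N) is wider than the single split conformal band C_split(X) at level 1-α. -/

import Mathlib

/-!
Write `R = |Y - μ̃(X)|`; its distribution function `F` is continuous. Choose `t₁ < t₂` with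
`1 - α < F t₁` and `F t₂ < 1 - α / N`, each with a margin `ε`. By Chebyshev's inequality for the
empirical counts, with probability tending to one the ranking half of split `0` has at least
`⌈(n + 1)(1 - α)⌉` residuals about `μ̃` below `t₁`, while every ranking half has fewer than
`⌈(n + 1)(1 - α / N)⌉` below `t₂`; by stability (and a union bound over the `N` splits) every fit
is uniformly `η_n`-close to `μ̃`. On that event fitted residuals are within `η_n` of residuals
about `μ̃`, so the single band has half-width at most `t₁ + η_n`, whereas every Bonferroni band
contains `[μ̃ x - (t₂ - 2η_n), μ̃ x + (t₂ - 2η_n)]`, which is longer as soon as `3η_n < t₂ - t₁`.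
-/

open MeasureTheory Finset Filter

open scoped Classical ENNReal

/-- The `k`-th smallest value (1-indexed) of `v` over the finite index set `s`. -/
noncomputable def kthSmallest {ι : Type*} (s : Finset ι) (v : ι → ℝ) (k : ℕ) : ℝ :=
  sInf {t : ℝ | k ≤ (s.filter fun i => v i ≤ t).card}

namespace kthSmallest

variable {ι : Type*} {s : Finset ι} {u v : ι → ℝ} {k : ℕ} {t η : ℝ}

lemma le_of_le_card_filter (hk : 1 ≤ k) (h : k ≤ #(s.filter fun i => v i ≤ t)) :
    kthSmallest s v k ≤ t := by
  refine csInf_le ⟨-∑ i ∈ s, |v i|, fun t' ht' => ?_⟩ h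
  obtain ⟨i, hi⟩ := card_pos.1 (hk.trans ht')
  rw [mem_filter] at hi
  linarith [neg_abs_le (v i), single_le_sum (fun j _ => abs_nonneg (v j)) hi.1]

lemma exists_le_card_filter (hks : k ≤ #s) : ∃ t, k ≤ #(s.filter fun i => v i ≤ t) := by
  refine ⟨∑ j ∈ s, |v j|, ?_⟩
  rwa [filter_true_of_mem fun i hi =>
    (le_abs_self _).trans (single_le_sum (fun j _ => abs_nonneg (v j)) hi)]

lemma le_of_card_filter_lt (hks : k ≤ #s) (h : #(s.filter fun i => v i ≤ t) < k) :
    t ≤ kthSmallest s v k := by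
  refine le_csInf (exists_le_card_filter hks) fun t' ht' => ?_
  by_contra! hlt
  exact h.not_ge (ht'.trans (card_le_card (monotone_filter_right s fun _ _ hi => hi.trans hlt.le)))

lemma le_add_of_forall_le_add (huv : ∀ i ∈ s, u i ≤ v i + η) (hk : 1 ≤ k) (hks : k ≤ #s) :
    kthSmallest s u k ≤ kthSmallest s v k + η := by
  refine sub_le_iff_le_add.1 (le_csInf (exists_le_card_filter hks) fun t' ht' => ?_)
  refine sub_le_iff_le_add.2 (le_of_le_card_filter hk (ht'.trans (card_le_card ?_)))
  exact monotone_filter_right s fun i hi hvi => (huv i hi).trans (by linarith)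

end kthSmallest

section Product

variable {ι κ S : Type*} [Fintype ι] [Fintype κ] [MeasurableSpace S] (Q : Measure S)
  [IsProbabilityMeasure Q]

lemma measurePreserving_comp_embedding (g : ι ↪ κ) :
    MeasurePreserving (fun z : κ → S => z ∘ g) (Measure.pi fun _ => Q) (Measure.pi fun _ => Q) := by
  refine ⟨by fun_prop, (Measure.pi_eq fun s hs => ?_).symm⟩
  have hpre : (fun z : κ → S => z ∘ g) ⁻¹' Set.univ.pi s
      = Set.univ.pi (Function.extend g s fun _ => Set.univ) := by
    ext z
    simp only [Set.mem_preimage, Set.mem_univ_pi, Function.comp_apply]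
    refine ⟨fun h k => ?_, fun h i => by simpa [g.injective.extend_apply] using h (g i)⟩
    by_cases hk : ∃ i, g i = k
    · obtain ⟨i, rfl⟩ := hk
      simpa [g.injective.extend_apply] using h i
    · simp [Function.extend_apply' _ _ _ hk]
  rw [Measure.map_apply (by fun_prop) (.univ_pi hs), hpre, Measure.pi_pi]
  refine (Fintype.prod_of_injective g g.injective _ _ (fun k hk => ?_) fun i => ?_).symm
  · simp [Function.extend_apply' _ _ _ (by simpa using hk)]
  · simp [g.injective.extend_apply]

lemma measure_comp_preimage_le (g : ι ↪ κ) (s : Set (ι → S)) :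
    Measure.pi (fun _ => Q) ((fun z : κ → S => z ∘ g) ⁻¹' s) ≤ Measure.pi (fun _ => Q) s :=
  (measurePreserving_comp_embedding Q g).map_eq ▸
    Measure.le_map_apply (measurePreserving_comp_embedding Q g).measurable.aemeasurable s

end Product

section Counting

open ProbabilityTheory

variable {S : Type*} [MeasurableSpace S] (Q : Measure S) [IsProbabilityMeasure Q] {n : ℕ}
  (hn : 0 < n) {B : Set S} (hB : MeasurableSet B) {ε : ℝ} (hε : 0 < ε)
include hn hB hε

lemma measure_le_abs_card_filter_sub_le :
    Measure.pi (fun _ : Fin n => Q) {w | n * ε ≤ |(#{i | w i ∈ B} : ℝ) - n * Q.real B|}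
      ≤ ENNReal.ofReal (1 / (4 * ε ^ 2 * n)) := by
  set X : (Fin n → S) → ℝ := ∑ i, fun w => B.indicator 1 (w i) with hX
  have hind : MemLp (B.indicator (1 : S → ℝ)) 2 Q :=
    memLp_indicator_const 2 hB 1 (Or.inr (measure_ne_top _ _))
  have hcard : ∀ w, (#{i | w i ∈ B} : ℝ) = X w := by
    intro w
    simp [hX, Set.indicator_apply]
  have hmean : (Measure.pi fun _ => Q)[X] = n * Q.real B := by
    simp only [hX, Finset.sum_apply]
    rw [integral_finsetSum (f := fun (i : Fin n) (w : Fin n → S) => B.indicator (1 : S → ℝ) (w i))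
      _ fun i _ => (hind.comp_measurePreserving (measurePreserving_eval _ i)).integrable one_le_two]
    simp [integral_comp_eval (μ := fun _ : Fin n => Q) hind.aestronglyMeasurable,
      integral_indicator_one hB]
  have hvar : variance X (Measure.pi fun _ => Q) ≤ n / 4 := by
    rw [hX, variance_sum_pi fun _ => hind]
    have h01 : ∀ q, B.indicator (1 : S → ℝ) q ∈ Set.Icc 0 1 := fun q => by
      by_cases hq : q ∈ B <;> simp [hq]
    calc ∑ _i : Fin n, variance (B.indicator 1) Q ≤ ∑ _i : Fin n, ((1 - 0) / 2 : ℝ) ^ 2 :=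
          sum_le_sum fun _ _ => variance_le_sq_of_bounded (ae_of_all _ h01) hind.aemeasurable
      _ = n / 4 := by rw [sum_const, card_univ, Fintype.card_fin, nsmul_eq_mul]; ring
  have hXmem : MemLp X 2 (Measure.pi fun _ => Q) :=
    memLp_finsetSum' _ fun i _ => hind.comp_measurePreserving (measurePreserving_eval _ i)
  calc _ = (Measure.pi fun _ => Q) {w | n * ε ≤ |X w - (Measure.pi fun _ => Q)[X]|} := by
        simp only [hcard, hmean]
    _ ≤ ENNReal.ofReal (variance X (Measure.pi fun _ => Q) / (n * ε) ^ 2) :=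
        meas_ge_le_variance_div_sq hXmem (by positivity)
    _ ≤ _ := by
      refine ENNReal.ofReal_le_ofReal ?_
      rw [div_le_div_iff₀ (by positivity) (by positivity)]
      calc variance X _ * (4 * ε ^ 2 * n) ≤ n / 4 * (4 * ε ^ 2 * n) := by gcongr
        _ = 1 * (n * ε) ^ 2 := by ring

lemma measure_card_filter_lt_le {k : ℕ} (hk : k ≤ n * (Q.real B - ε)) :
    Measure.pi (fun _ : Fin n => Q) {w | #{i | w i ∈ B} < k}
      ≤ ENNReal.ofReal (1 / (4 * ε ^ 2 * n)) := by
  refine (measure_mono fun w hw => ?_).trans (measure_le_abs_card_filter_sub_le Q hn hB hε)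
  have : (#{i | w i ∈ B} : ℝ) < k := by exact_mod_cast hw
  rw [Set.mem_ofPred_eq, abs_sub_comm]
  exact le_abs.2 (Or.inl (by linarith))

lemma measure_le_card_filter_le {k : ℕ} (hk : n * (Q.real B + ε) ≤ k) :
    Measure.pi (fun _ : Fin n => Q) {w | k ≤ #{i | w i ∈ B}}
      ≤ ENNReal.ofReal (1 / (4 * ε ^ 2 * n)) := by
  refine (measure_mono fun w hw => ?_).trans (measure_le_abs_card_filter_sub_le Q hn hB hε)
  have : (k : ℝ) ≤ #{i | w i ∈ B} := by exact_mod_cast hw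
  rw [Set.mem_ofPred_eq]
  exact le_abs.2 (Or.inl (by linarith))

end Counting

namespace ProbabilityTheory

variable {ν : Measure ℝ} [IsProbabilityMeasure ν] [NullSingletonClass ν]

lemma continuous_cdf : Continuous (cdf ν) := by
  refine continuous_iff_continuousAt.2 fun a => ?_
  rw [(cdf ν).mono.continuousAt_iff_leftLim_eq_rightLim, (cdf ν).rightLim_eq]
  have hjump := (cdf ν).measure_singleton a
  rw [measure_cdf, measure_singleton, eq_comm, ENNReal.ofReal_eq_zero] at hjump
  linarith [(cdf ν).mono.leftLim_le (le_refl a)]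

lemma exists_cdf_eq {p : ℝ} (hp : p ∈ Set.Ioo 0 1) : ∃ t, cdf ν t = p :=
  mem_range_of_exists_le_of_exists_ge continuous_cdf
    ((tendsto_cdf_atBot ν).eventually (ge_mem_nhds hp.1)).exists
    ((tendsto_cdf_atTop ν).eventually (le_mem_nhds hp.2)).exists

end ProbabilityTheory

lemma measurable_of_eventually_abs_sub_lt {α : Type*} [MeasurableSpace α] {f : α → ℝ}
    {η : ℕ → ℝ} (hη : Tendsto η atTop (nhds 0))
    (h : ∀ᶠ n in atTop, ∃ g : α → ℝ, Measurable g ∧ ∀ x, |g x - f x| < η n) :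
    Measurable f := by
  obtain ⟨n₀, hn₀⟩ := eventually_atTop.1 h
  choose g hgm hg using fun n => hn₀ (n + n₀) (Nat.le_add_left n₀ n)
  refine measurable_of_tendsto_metrizable hgm (tendsto_pi_nhds.2 fun x => ?_)
  have hη' : Tendsto (fun n => η (n + n₀)) atTop (nhds 0) := hη.comp (tendsto_add_atTop_nat n₀)
  exact tendsto_iff_norm_sub_tendsto_zero.2 <|
    squeeze_zero_norm (fun n => by simpa using (hg n x).le) hη'

lemma measurable_of_stable {S α : Type*} [MeasurableSpace S] [MeasurableSpace α]
    {P : Measure S} [IsProbabilityMeasure P] {A : (n : ℕ) → (Fin n → S) → α → ℝ}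
    (hA : ∀ n, Measurable fun p : (Fin n → S) × α => A n p.1 p.2) {f : α → ℝ} {η ρ : ℕ → ℝ}
    (hη : Tendsto η atTop (nhds 0)) (hρ : Tendsto ρ atTop (nhds 0))
    (hstab : ∀ᶠ n in atTop,
      Measure.pi (fun _ : Fin n => P) {w | ¬ ∀ x, |A n w x - f x| < η n} ≤ ENNReal.ofReal (ρ n)) :
    Measurable f := by
  refine measurable_of_eventually_abs_sub_lt hη ?_
  have hρ' : ∀ᶠ n in atTop, ENNReal.ofReal (ρ n) < 1 :=
    (ENNReal.tendsto_ofReal hρ).eventually_lt_const (by simp)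
  filter_upwards [hstab, hρ'] with n hn hlt
  have hbad : {w | ¬ ∀ x, |A n w x - f x| < η n} ≠ Set.univ := fun h => by
    rw [h, measure_univ] at hn
    exact (hn.trans_lt hlt).false
  obtain ⟨w, hw⟩ := Set.nonempty_compl.2 hbad
  exact ⟨A n w, (hA n).comp (measurable_const.prodMk measurable_id), by simpa using hw⟩

lemma tendsto_measure_one_of_measure_compl_le {Ω : ℕ → Type*} [∀ n, MeasurableSpace (Ω n)]
    {μ : ∀ n, Measure (Ω n)} [∀ n, IsProbabilityMeasure (μ n)] {s : ∀ n, Set (Ω n)}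
    {b : ℕ → ℝ≥0∞} (hb : Tendsto b atTop (nhds 0)) (h : ∀ᶠ n in atTop, μ n (s n)ᶜ ≤ b n) :
    Tendsto (fun n => μ n (s n)) atTop (nhds 1) := by
  have hlow : Tendsto (fun n => 1 - b n) atTop (nhds 1) := by
    simpa using ENNReal.Tendsto.sub tendsto_const_nhds hb (Or.inl ENNReal.one_ne_top)
  refine tendsto_of_tendsto_of_tendsto_of_le_of_le' hlow tendsto_const_nhds ?_
    (Eventually.of_forall fun n => prob_le_one)
  filter_upwards [h] with n hn
  calc 1 - b n ≤ 1 - μ n (s n)ᶜ := tsub_le_tsub_left hn 1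
    _ ≤ μ n (s n) := by
      rw [tsub_le_iff_left, ← measure_univ (μ := μ n), ← Set.compl_union_self (s n)]
      exact measure_union_le _ _

lemma tendsto_of_tendsto_natCast_mul {ρ : ℕ → ℝ}
    (hρ : Tendsto (fun n : ℕ => (n : ℝ) * ρ n) atTop (nhds 0)) : Tendsto ρ atTop (nhds 0) := by
  refine (tendsto_congr' ?_).1 (by simpa using hρ.mul tendsto_inv_atTop_nhds_zero_nat)
  filter_upwards [eventually_ne_atTop 0] with n hn
  field_simp

lemma tendsto_ofReal_one_div_mul_natCast {c : ℝ} (hc : 0 < c) :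
    Tendsto (fun n : ℕ => ENNReal.ofReal (1 / (c * n))) atTop (nhds 0) := by
  have h := tendsto_const_nhds (x := (1 : ℝ)).div_atTop
    (tendsto_natCast_atTop_atTop.const_mul_atTop hc)
  simpa using ENNReal.tendsto_ofReal h

open ProbabilityTheory in
lemma exists_quantiles_between {Ω : Type*} [MeasurableSpace Ω] {P : Measure Ω}
    [IsProbabilityMeasure P] {R : Ω → ℝ} (hR : Measurable R) (hR0 : ∀ ω, 0 ≤ R ω)
    (hatom : ∀ t, P {ω | R ω = t} = 0) {β₁ β₂ : ℝ} (h₁ : 0 < β₁) (h₁₂ : β₁ < β₂) (h₂ : β₂ < 1) :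
    ∃ t₁ t₂ ε : ℝ, 0 < ε ∧ 0 ≤ t₁ ∧ t₁ < t₂ ∧
      β₁ < P.real {ω | R ω ≤ t₁} - ε ∧ P.real {ω | R ω ≤ t₂} + ε ≤ β₂ := by
  have : IsProbabilityMeasure (P.map R) := Measure.isProbabilityMeasure_map hR.aemeasurable
  have : NullSingletonClass (P.map R) :=
    ⟨fun t => by rw [Measure.map_apply hR (measurableSet_singleton t)]; exact hatom t⟩
  have hF : ∀ t, cdf (P.map R) t = P.real {ω | R ω ≤ t} := fun t => by
    rw [cdf_eq_real, map_measureReal_apply hR measurableSet_Iic]; rfl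
  set ε := (β₂ - β₁) / 4 with hε
  obtain ⟨t₁, ht₁⟩ := exists_cdf_eq (ν := P.map R) (p := β₁ + 2 * ε) ⟨by linarith, by linarith⟩
  obtain ⟨t₂, ht₂⟩ := exists_cdf_eq (ν := P.map R) (p := β₂ - ε) ⟨by linarith, by linarith⟩
  refine ⟨t₁, t₂, ε, by linarith, ?_, ?_, by rw [← hF]; linarith, by rw [← hF]; linarith⟩
  · by_contra! ht₁0
    have hempty : {ω | R ω ≤ t₁} = ∅ :=
      Set.eq_empty_of_forall_notMem fun ω hω => (hω.trans_lt ht₁0).not_ge (hR0 ω)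
    rw [hF, hempty, measureReal_empty] at ht₁
    linarith
  · by_contra! ht₂₁
    linarith [monotone_cdf (P.map R) ht₂₁]

lemma eventually_natCeil_le {β p : ℝ} (hβ : 0 ≤ β) (h : β < p) :
    ∀ᶠ n : ℕ in atTop, (⌈((n : ℝ) + 1) * β⌉₊ : ℝ) ≤ n * p := by
  have hlin : Tendsto (fun n : ℕ => (n : ℝ) * (p - β)) atTop atTop :=
    tendsto_natCast_atTop_atTop.atTop_mul_const (sub_pos.2 h)
  filter_upwards [hlin.eventually_ge_atTop (β + 1)] with n hn
  linarith [Nat.ceil_lt_add_one (show 0 ≤ ((n : ℝ) + 1) * β by positivity)]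

lemma natCast_mul_le_natCeil {β p : ℝ} (hβ : 0 ≤ β) (h : p ≤ β) (n : ℕ) :
    (n : ℝ) * p ≤ ⌈((n : ℝ) + 1) * β⌉₊ :=
  calc (n : ℝ) * p ≤ ((n : ℝ) + 1) * β := by nlinarith [(n.cast_nonneg : (0 : ℝ) ≤ n)]
    _ ≤ _ := Nat.le_ceil _

lemma volume_Icc_lt_volume_iInter_Icc {ι : Type*} {c D : ι → ℝ} {j₀ : ι} {D₀ x t₁ t₂ η : ℝ}
    (hc : ∀ j, |c j - x| < η) (hD₀ : D₀ ≤ t₁ + η) (hD : ∀ j, t₂ - η ≤ D j) (ht₁ : 0 ≤ t₁)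
    (ht : 3 * η < t₂ - t₁) :
    volume (Set.Icc (c j₀ - D₀) (c j₀ + D₀)) < volume (⋂ j, Set.Icc (c j - D j) (c j + D j)) := by
  have hη : 0 < η := (abs_nonneg _).trans_lt (hc j₀)
  have hsub :
      Set.Icc (x - (t₂ - 2 * η)) (x + (t₂ - 2 * η)) ⊆ ⋂ j, Set.Icc (c j - D j) (c j + D j) :=
    fun y hy => Set.mem_iInter.2 fun j => by
      obtain ⟨h₁, h₂⟩ := abs_lt.1 (hc j)
      exact ⟨by linarith [hy.1, hD j], by linarith [hy.2, hD j]⟩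
  calc volume (Set.Icc (c j₀ - D₀) (c j₀ + D₀)) = ENNReal.ofReal (2 * D₀) := by
        rw [Real.volume_Icc]; ring_nf
    _ < ENNReal.ofReal (2 * (t₂ - 2 * η)) :=
        (ENNReal.ofReal_lt_ofReal_iff (by linarith)).2 (by linarith)
    _ = volume (Set.Icc (x - (t₂ - 2 * η)) (x + (t₂ - 2 * η))) := by
        rw [Real.volume_Icc]; ring_nf
    _ ≤ _ := measure_mono hsub

section SplitConformal

variable {E : Type*}

def absResidual (m : E → ℝ) (q : E × ℝ) : ℝ := |q.2 - m q.1|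

noncomputable def splitRadius {n : ℕ} (m : E → ℝ) (w : Fin n → E × ℝ) (k : ℕ) : ℝ :=
  kthSmallest univ (fun i => absResidual m (w i)) k

/-- With `k = ⌈(n + 1)(1 - α)⌉₊` this is the split conformal interval `C_split(x)` at level `1 - α`,
fitted by `m` and calibrated on the ranking sample `w`. -/
def splitBand {n : ℕ} (m : E → ℝ) (w : Fin n → E × ℝ) (k : ℕ) (x : E) : Set ℝ :=
  Set.Icc (m x - splitRadius m w k) (m x + splitRadius m w k)

lemma abs_absResidual_sub_le (m m' : E → ℝ) (q : E × ℝ) :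
    |absResidual m q - absResidual m' q| ≤ |m q.1 - m' q.1| := by
  refine (abs_abs_sub_abs_le_abs_sub _ _).trans_eq ?_
  rw [← abs_neg]
  ring_nf

lemma splitRadius_le_add {n : ℕ} {m m' : E → ℝ} {η : ℝ} (h : ∀ x, |m x - m' x| ≤ η)
    (w : Fin n → E × ℝ) {k : ℕ} (hk : 1 ≤ k) (hkn : k ≤ n) :
    splitRadius m w k ≤ splitRadius m' w k + η :=
  kthSmallest.le_add_of_forall_le_add (fun i _ => by
      linarith [le_abs_self (absResidual m (w i) - absResidual m' (w i)),
        abs_absResidual_sub_le m m' (w i), h (w i).1])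
    hk (by simpa using hkn)

lemma volume_splitBand_lt_volume_iInter_splitBand {ι : Type*} {n : ℕ} {m : E → ℝ}
    {fit : ι → E → ℝ} {w : ι → Fin n → E × ℝ} {j₀ : ι} {k₁ k₂ : ℕ} {t₁ t₂ η : ℝ}
    (hfit : ∀ j x, |fit j x - m x| < η) (hk₁ : 1 ≤ k₁) (hk₂ : k₂ ≤ n)
    (h₁ : k₁ ≤ #{i | absResidual m (w j₀ i) ≤ t₁})
    (h₂ : ∀ j, #{i | absResidual m (w j i) ≤ t₂} < k₂) (ht₁ : 0 ≤ t₁) (ht : 3 * η < t₂ - t₁)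
    (x : E) :
    volume (splitBand (fit j₀) (w j₀) k₁ x) < volume (⋂ j, splitBand (fit j) (w j) k₂ x) := by
  have hk₁n : k₁ ≤ n := h₁.trans ((card_le_univ _).trans_eq (Fintype.card_fin n))
  refine volume_Icc_lt_volume_iInter_Icc (x := m x) (fun j => hfit j x) ?_ (fun j => ?_) ht₁ ht
  · calc splitRadius (fit j₀) (w j₀) k₁ ≤ splitRadius m (w j₀) k₁ + η :=
          splitRadius_le_add (fun x => (hfit j₀ x).le) _ hk₁ hk₁n
      _ ≤ t₁ + η := add_le_add_left (kthSmallest.le_of_le_card_filter hk₁ h₁) η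
  · have hk₂pos : 1 ≤ k₂ := Nat.one_le_of_lt (h₂ j)
    have hfit' : ∀ x, |m x - fit j x| ≤ η := fun x => by rw [abs_sub_comm]; exact (hfit j x).le
    have hle := splitRadius_le_add hfit' (w j) hk₂pos hk₂
    have hge := kthSmallest.le_of_card_filter_lt (by simpa using hk₂) (h₂ j)
    simp only [splitRadius] at hle ⊢
    linarith

variable [MeasurableSpace E]

lemma Measurable.absResidual {m : E → ℝ} (hm : Measurable m) : Measurable (absResidual m) :=
  (measurable_snd.sub (hm.comp measurable_fst)).abs

lemma measure_compl_setOf_forall_volume_splitBand_lt_le {ι κ : Type*} [Fintype ι] [Fintype κ]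
    {P : Measure (E × ℝ)} [IsProbabilityMeasure P] {m : E → ℝ} (hm : Measurable m) {n : ℕ}
    (hn : 0 < n) (fitter : (Fin n → E × ℝ) → E → ℝ) (gfit grank : ι → Fin n ↪ κ) (j₀ : ι)
    {k₁ k₂ : ℕ} {t₁ t₂ η ρ ε : ℝ} (hε : 0 < ε)
    (hstab : Measure.pi (fun _ => P) {w | ¬ ∀ x, |fitter w x - m x| < η} ≤ ENNReal.ofReal ρ)
    (hk₁ : 1 ≤ k₁) (hk₂ : k₂ ≤ n) (hk₁t : k₁ ≤ n * (P.real {q | absResidual m q ≤ t₁} - ε))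
    (hk₂t : n * (P.real {q | absResidual m q ≤ t₂} + ε) ≤ k₂) (ht₁ : 0 ≤ t₁)
    (ht : 3 * η < t₂ - t₁) :
    Measure.pi (fun _ : κ => P)
        {z | ∀ x, volume (splitBand (fitter (z ∘ gfit j₀)) (z ∘ grank j₀) k₁ x)
          < volume (⋂ j, splitBand (fitter (z ∘ gfit j)) (z ∘ grank j) k₂ x)}ᶜ
      ≤ Fintype.card ι * ENNReal.ofReal ρ
        + (Fintype.card ι + 1) * ENNReal.ofReal (1 / (4 * ε ^ 2 * n)) := by
  set B : ℝ → Set (E × ℝ) := fun t => {q | absResidual m q ≤ t}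
  have hB : ∀ t, MeasurableSet (B t) := fun t => measurableSet_le hm.absResidual measurable_const
  set U : Set (κ → E × ℝ) :=
    ((⋃ j, (fun z => z ∘ gfit j) ⁻¹' {w | ¬ ∀ x, |fitter w x - m x| < η})
      ∪ (fun z => z ∘ grank j₀) ⁻¹' {w | #{i | w i ∈ B t₁} < k₁})
      ∪ ⋃ j, (fun z => z ∘ grank j) ⁻¹' {w | k₂ ≤ #{i | w i ∈ B t₂}}
  refine (measure_mono (t := U) fun z hz => ?_).trans ((measure_union_le _ _).trans ?_)
  · by_contra hzU
    simp only [U, Set.mem_union, Set.mem_iUnion, Set.mem_preimage, Set.mem_ofPred_eq, not_or,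
      not_exists, not_not, not_lt, not_le] at hzU
    obtain ⟨⟨hfit, h₁⟩, h₂⟩ := hzU
    exact hz fun x => volume_splitBand_lt_volume_iInter_splitBand hfit hk₁ hk₂ h₁ h₂ ht₁ ht x
  have hfit : ∀ j, Measure.pi (fun _ => P) ((fun z : κ → E × ℝ => z ∘ gfit j) ⁻¹'
      {w | ¬ ∀ x, |fitter w x - m x| < η}) ≤ ENNReal.ofReal ρ :=
    fun j => (measure_comp_preimage_le P (gfit j) _).trans hstab
  have h₁ := (measure_comp_preimage_le P (grank j₀) _).trans
    (measure_card_filter_lt_le P hn (hB t₁) hε hk₁t)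
  have h₂ := fun j => (measure_comp_preimage_le P (grank j) _).trans
    (measure_le_card_filter_le P hn (hB t₂) hε hk₂t)
  calc _ ≤ (∑ _j : ι, ENNReal.ofReal ρ + ENNReal.ofReal (1 / (4 * ε ^ 2 * n)))
        + ∑ _j : ι, ENNReal.ofReal (1 / (4 * ε ^ 2 * n)) := by
        gcongr
        · exact (measure_union_le _ _).trans (add_le_add
            ((measure_iUnion_fintype_le _ _).trans (sum_le_sum fun j _ => hfit j)) h₁)
        · exact (measure_iUnion_fintype_le _ _).trans (sum_le_sum fun j _ => h₂ j)
    _ = _ := by simp only [sum_const, card_univ, nsmul_eq_mul]; ring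

end SplitConformal

/-- Multi-split conformal bands are wider: under A0 (i.i.d. data
from `P`, here `Y = μ(X) + ε`), A1 (ε independent of X, with density symmetric
about 0 and nonincreasing on `[0,∞)`), A2 (sampling stability
`P(‖μ̂_n - μ̃‖_∞ ≥ η_n) ≤ ρ_n` with `η_n = o(1)` and `ρ_n = o(n⁻¹)`), and
continuity of the distribution of `|Y - μ̃(X)|`, with probability tending to 1 as
`n → ∞`, the `N`-fold Bonferroni multi-split band
`C_split^{(N)}(X) = ∩_{j<N} C_{split,j}(X)` (each split at level `1-α/N`, with
arbitrary splits given by permutations `τ n j` of the `2n` training points) is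
wider (in Lebesgue measure, at the new point `X`) than the single split conformal
band `C_split(X)` at level `1-α` (built from the split `τ n 0`). -/
theorem multisplit_wider
    {E : Type*} [MeasurableSpace E]
    (Px : Measure E) [IsProbabilityMeasure Px]
    (Pe : Measure ℝ) [IsProbabilityMeasure Pe]
    (μReg : E → ℝ) (hmreg : Measurable μReg)
    (P : Measure (E × ℝ))
    (hP : P = Measure.map (fun q : E × ℝ => (q.1, μReg q.1 + q.2)) (Px.prod Pe))
    (A : (n : ℕ) → (Fin n → E × ℝ) → E → ℝ)
    (hA : ∀ n, Measurable fun p : (Fin n → E × ℝ) × E => A n p.1 p.2)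
    (μtil : E → ℝ) (η ρ : ℕ → ℝ)
    (hη : Tendsto η atTop (nhds 0))
    (hρ : Tendsto (fun n : ℕ => (n : ℝ) * ρ n) atTop (nhds 0))
    (hstab : ∀ᶠ n in atTop,
      (Measure.pi fun _ : Fin n => P) {w | ¬ ∀ x, |A n w x - μtil x| < η n}
        ≤ ENNReal.ofReal (ρ n))
    (hcont : ∀ t : ℝ, P {q : E × ℝ | |q.2 - μtil q.1| = t} = 0)
    (N : ℕ) (hN : 2 ≤ N)
    (τ : (n : ℕ) → Fin N → Equiv.Perm (Fin (n + n)))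
    (α : ℝ) (hα : α ∈ Set.Ioo (0 : ℝ) 1) :
    Tendsto
      (fun n =>
        (Measure.pi fun _ : Fin (n + n + 1) => P)
          {z | let fit : Fin N → E → ℝ := fun j =>
                 A n (fun k : Fin n => z ((τ n j (Fin.castAdd n k)).castSucc));
               let d : Fin N → ℝ → ℝ := fun j β =>
                 kthSmallest Finset.univ
                   (fun k : Fin n =>
                     |(z ((τ n j (Fin.natAdd n k)).castSucc)).2
                       - fit j (z ((τ n j (Fin.natAdd n k)).castSucc)).1|)
                   ⌈((n : ℝ) + 1) * β⌉₊;
               let x : E := (z (Fin.last (n + n))).1;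
               volume (Set.Icc (fit ⟨0, by omega⟩ x - d ⟨0, by omega⟩ (1 - α))
                       (fit ⟨0, by omega⟩ x + d ⟨0, by omega⟩ (1 - α)))
                 < volume (⋂ j : Fin N,
                     Set.Icc (fit j x - d j (1 - α / N)) (fit j x + d j (1 - α / N)))})
      atTop (nhds (1 : ℝ≥0∞)) := by
  obtain ⟨hα0, hα1⟩ := hα
  have : IsProbabilityMeasure P := hP ▸ Measure.isProbabilityMeasure_map (by fun_prop)
  have hρ0 := tendsto_of_tendsto_natCast_mul hρ
  have hμtil : Measurable μtil := measurable_of_stable hA hη hρ0 hstab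
  have hαN : 0 < α / N ∧ α / N < α := ⟨by positivity, div_lt_self hα0 (by exact_mod_cast hN)⟩
  have hβ₂ : 1 - α / N < 1 := by linarith
  obtain ⟨t₁, t₂, ε, hε, ht₁, ht₁₂, hq₁, hq₂⟩ := exists_quantiles_between hμtil.absResidual
    (fun _ => abs_nonneg _) hcont (by linarith : 0 < 1 - α) (by linarith) hβ₂
  refine tendsto_measure_one_of_measure_compl_le (b := fun n => N * ENNReal.ofReal (ρ n)
    + (N + 1) * ENNReal.ofReal (1 / (4 * ε ^ 2 * n))) ?_ ?_
  · have hρ' : Tendsto (fun n => ENNReal.ofReal (ρ n)) atTop (nhds 0) := by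
      simpa using ENNReal.tendsto_ofReal hρ0
    simpa using (ENNReal.Tendsto.const_mul hρ' (by simp)).add (ENNReal.Tendsto.const_mul
      (tendsto_ofReal_one_div_mul_natCast (by positivity : 0 < 4 * ε ^ 2)) (by simp))
  · filter_upwards [hstab, eventually_gt_atTop 0, eventually_natCeil_le (by linarith) hq₁,
      eventually_natCeil_le (p := 1) (by linarith) hβ₂,
      hη.eventually_lt_const (show 0 < (t₂ - t₁) / 3 by linarith)] with n hstabn hn hk₁ hk₂ hηn
    have hbad := measure_compl_setOf_forall_volume_splitBand_lt_le hμtil hn (A n)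
      (fun j => (Fin.castAddEmb n).trans ((τ n j).toEmbedding.trans Fin.castSuccEmb))
      (fun j => (Fin.natAddEmb n).trans ((τ n j).toEmbedding.trans Fin.castSuccEmb))
      ⟨0, by omega⟩ hε hstabn (Nat.one_le_ceil_iff.2 (by nlinarith))
      (by exact_mod_cast (by simpa using hk₂)) hk₁ (natCast_mul_le_natCeil (by linarith) hq₂ n)
      ht₁ (by linarith)
    refine (measure_mono (Set.compl_subset_compl.2 ?_)).trans (hbad.trans_eq (by simp))
    exact fun z hz => hz _
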